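/- arXiv:2002.10452 — 5 statements merged into one kernel-verified Lean document; each statement's English description precedes it below -/
import Mathlib

section
/- Let n ≥ 1, let J ⊆ ℝ be an interval, let g, f_1, …, f_n : ℝ^{2n} → ℝ be continuous, and let (x, y) : J → ℝ^n × ℝ^n be a C¹ solution on J of the Eulerian system ẋ_i = g(x,y)·x_i − f_i(x,y)·y_i, ẏ_i = g(x,y)·y_i + f_i(x,y)·x_i, and let t₀ ∈ J. Then for each index i ∈ {1,…,n}: if (x_i(t₀), y_i(t₀)) = (0,0) then (x_i(t), y_i(t)) = (0,0) for every t ∈ J, and if (x_i(t₀), y_i(t₀)) ≠ (0,0) then (x_i(t), y_i(t)) ≠ (0,0) for every t ∈ J. (Hence each primary cell M_{k,σ}, determined by which coordinate pairs vanish, is invariant under all Eulerian flows.) -/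
/-!
Along a solution, `ρ = xᵢ² + yᵢ²` satisfies the scalar linear equation `ρ' = 2 g(x, y) ρ`,
whose coefficient is continuous, hence bounded on compact subintervals of `J`. By Grönwall's
inequality a solution of such an equation that vanishes at one point of `J` vanishes on all
of `J`, so the zero set of `ρ` in `J` is empty or all of `J`.
-/

open Set

section LinearODE

variable {E : Type*} [NormedAddCommGroup E] [NormedSpace ℝ E] {r : ℝ → E} {c : ℝ → ℝ}
  {J : Set ℝ} {a b : ℝ}

theorem Set.OrdConnected.eq_zero_of_hasDerivWithinAt_smul_self_of_le (hJ : J.OrdConnected)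
    (hr : ∀ t ∈ J, HasDerivWithinAt r (c t • r t) J t) (hc : ContinuousOn c J)
    (ha : a ∈ J) (hb : b ∈ J) (hab : a ≤ b) (hra : r a = 0) : r b = 0 := by
  have hsub : Icc a b ⊆ J := hJ.out ha hb
  obtain ⟨K, hK⟩ := isCompact_Icc.exists_bound_of_continuousOn (hc.mono hsub)
  refine eq_zero_of_abs_deriv_le_mul_abs_self_of_eq_zero_right (K := K)
    (fun t ht => (hr t (hsub ht)).continuousWithinAt.mono hsub)
    (fun t ht => (hr t (hsub (Ico_subset_Icc_self ht))).mono_of_mem_nhdsWithin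
      (hJ.mem_nhdsGE (hsub (Ico_subset_Icc_self ht)) hb ht.2))
    hra (fun t ht => ?_) b ⟨hab, le_rfl⟩
  rw [norm_smul]
  exact mul_le_mul_of_nonneg_right (hK t (Ico_subset_Icc_self ht)) (norm_nonneg _)

theorem Set.OrdConnected.eq_zero_of_hasDerivWithinAt_smul_self (hJ : J.OrdConnected)
    (hr : ∀ t ∈ J, HasDerivWithinAt r (c t • r t) J t) (hc : ContinuousOn c J)
    (ha : a ∈ J) (hb : b ∈ J) (hra : r a = 0) : r b = 0 := by
  rcases le_total a b with hab | hba
  · exact hJ.eq_zero_of_hasDerivWithinAt_smul_self_of_le hr hc ha hb hab hra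
  · -- run time backwards: `s ↦ r (-s)` solves the same kind of equation on `-J`
    have hJneg : (Neg.neg ⁻¹' J).OrdConnected := hJ.preimage_anti fun _ _ => neg_le_neg
    have hrneg : ∀ t ∈ Neg.neg ⁻¹' J,
        HasDerivWithinAt (fun s => r (-s)) (-c (-t) • r (-t)) (Neg.neg ⁻¹' J) t := by
      intro t ht
      simpa [neg_smul, Function.comp_def] using
        (hr (-t) ht).scomp t (hasDerivWithinAt_neg t _) (mapsTo_preimage _ _)
    have hcneg : ContinuousOn (fun t => -c (-t)) (Neg.neg ⁻¹' J) :=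
      (hc.comp continuousOn_neg (mapsTo_preimage _ _)).neg
    simpa using hJneg.eq_zero_of_hasDerivWithinAt_smul_self_of_le hrneg hcneg
      (by simpa using ha) (by simpa using hb) (neg_le_neg hba) (by simpa using hra)

end LinearODE

theorem HasDerivWithinAt.sq_add_sq_of_eulerian {u v : ℝ → ℝ} {p q : ℝ} {s : Set ℝ} {t : ℝ}
    (hu : HasDerivWithinAt u (p * u t - q * v t) s t)
    (hv : HasDerivWithinAt v (p * v t + q * u t) s t) :
    HasDerivWithinAt (fun τ => u τ ^ 2 + v τ ^ 2) (2 * p * (u t ^ 2 + v t ^ 2)) s t :=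
  ((hu.fun_pow 2).fun_add (hv.fun_pow 2)).congr_deriv (by ring)

theorem eulerian_cell_invariance_general
    (n : ℕ) (J : Set ℝ) (hJ : J.OrdConnected)
    (g : ((Fin n → ℝ) × (Fin n → ℝ)) → ℝ)
    (f : Fin n → ((Fin n → ℝ) × (Fin n → ℝ)) → ℝ)
    (hg : Continuous g)
    (x y : ℝ → Fin n → ℝ)
    (hx : ∀ t ∈ J, ∀ i : Fin n, HasDerivWithinAt (fun s => x s i)
      (g (x t, y t) * x t i - f i (x t, y t) * y t i) J t)
    (hy : ∀ t ∈ J, ∀ i : Fin n, HasDerivWithinAt (fun s => y s i)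
      (g (x t, y t) * y t i + f i (x t, y t) * x t i) J t)
    (t₀ : ℝ) (ht₀ : t₀ ∈ J) (i : Fin n) :
    ((x t₀ i = 0 ∧ y t₀ i = 0) → ∀ t ∈ J, x t i = 0 ∧ y t i = 0) ∧
    (¬ (x t₀ i = 0 ∧ y t₀ i = 0) → ∀ t ∈ J, ¬ (x t i = 0 ∧ y t i = 0)) := by
  set r : ℝ → ℝ := fun t => x t i ^ 2 + y t i ^ 2
  have hr : ∀ t ∈ J, HasDerivWithinAt r ((2 * g (x t, y t)) • r t) J t := fun t ht =>
    (hx t ht i).sq_add_sq_of_eulerian (hy t ht i)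
  have hxy : ContinuousOn (fun t => (x t, y t)) J :=
    (continuousOn_pi.2 fun j t ht => (hx t ht j).continuousWithinAt).prodMk
      (continuousOn_pi.2 fun j t ht => (hy t ht j).continuousWithinAt)
  have hc : ContinuousOn (fun t => 2 * g (x t, y t)) J :=
    continuousOn_const.mul (hg.comp_continuousOn hxy)
  have hr_eq_zero : ∀ t, r t = 0 ↔ x t i = 0 ∧ y t i = 0 := fun t => by
    simp only [r, sq, mul_self_add_mul_self_eq_zero]
  have hr_propagates {a b : ℝ} (ha : a ∈ J) (hb : b ∈ J) (hra : r a = 0) : r b = 0 :=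
    hJ.eq_zero_of_hasDerivWithinAt_smul_self hr hc ha hb hra
  exact ⟨fun h t ht => (hr_eq_zero t).1 (hr_propagates ht₀ ht ((hr_eq_zero t₀).2 h)),
    fun h t ht h' => h ((hr_eq_zero t₀).1 (hr_propagates ht ht₀ ((hr_eq_zero t).2 h')))⟩

/-- **Invariance of the primary cells under Eulerian flows.**
For an Eulerian system `ẋᵢ = g(x,y)·xᵢ − fᵢ(x,y)·yᵢ`, `ẏᵢ = g(x,y)·yᵢ + fᵢ(x,y)·xᵢ`
on an interval `J`, if the `i`-th coordinate pair vanishes at some `t₀ ∈ J` then it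
vanishes on all of `J`, and if it is nonzero at `t₀` then it is nonzero on all of `J`. -/
theorem eulerian_cell_invariance
    (n : ℕ) (hn : 1 ≤ n) (J : Set ℝ) (hJ : J.OrdConnected)
    (g : ((Fin n → ℝ) × (Fin n → ℝ)) → ℝ)
    (f : Fin n → ((Fin n → ℝ) × (Fin n → ℝ)) → ℝ)
    (hg : Continuous g) (hf : ∀ i, Continuous (f i))
    (x y : ℝ → Fin n → ℝ)
    (hx : ∀ t ∈ J, ∀ i : Fin n, HasDerivWithinAt (fun s => x s i)
      (g (x t, y t) * x t i - f i (x t, y t) * y t i) J t)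
    (hy : ∀ t ∈ J, ∀ i : Fin n, HasDerivWithinAt (fun s => y s i)
      (g (x t, y t) * y t i + f i (x t, y t) * x t i) J t)
    (t₀ : ℝ) (ht₀ : t₀ ∈ J) (i : Fin n) :
    ((x t₀ i = 0 ∧ y t₀ i = 0) → ∀ t ∈ J, x t i = 0 ∧ y t i = 0) ∧
    (¬ (x t₀ i = 0 ∧ y t₀ i = 0) → ∀ t ∈ J, ¬ (x t i = 0 ∧ y t i = 0)) :=
  eulerian_cell_invariance_general n J hJ g f hg x y hx hy t₀ ht₀ i
end

section
/- Let n ≥ 1, let J ⊆ ℝ be an interval, let g, f_1, …, f_n : ℝ^{2n} → ℝ be continuous, and let (x, y) : J → ℝ^n × ℝ^n be a C¹ solution on J of the Eulerian system ẋ_i = g(x,y)·x_i − f_i(x,y)·y_i, ẏ_i = g(x,y)·y_i + f_i(x,y)·x_i. Then for all indices i, j ∈ {1,…,n} and all s, t ∈ J: (x_i(t)² + y_i(t)²)·(x_j(s)² + y_j(s)²) = (x_j(t)² + y_j(t)²)·(x_i(s)² + y_i(s)²). (Hence the ratios of the radial amplitudes are conserved and every leaf M^C_{k,σ} = {x : c_j‖(x_{σ(i)},y_{σ(i)})‖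 = c_i‖(x_{σ(j)},y_{σ(j)})‖} is invariant under all Eulerian flows.) -/
/-!
Each amplitude `Rₖ = xₖ² + yₖ²` solves the scalar linear equation `Rₖ' = 2 g(x, y) Rₖ`, with a
coefficient that does not depend on `k`. An integrating factor therefore gives
`Rₖ(t) = Rₖ(s) · exp ∫ₛᵗ 2 g(x, y)` for every `k`: all amplitudes are rescaled by the same factor,
so their ratios are conserved.
-/

open Set Real

theorem ContinuousOn.hasDerivWithinAt_integral_uIcc {c : ℝ → ℝ} {s t : ℝ}
    (hc : ContinuousOn c (uIcc s t)) {u : ℝ} (hu : u ∈ uIcc s t) :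
    HasDerivWithinAt (fun v => ∫ w in s..v, c w) (c u) (uIcc s t) u := by
  have : Fact (u ∈ uIcc s t) := ⟨hu⟩
  refine intervalIntegral.integral_hasDerivWithinAt_right ?_ ?_ (hc u hu)
  · exact (hc.mono (uIcc_subset_uIcc left_mem_uIcc hu)).intervalIntegrable
  · exact ⟨_, self_mem_nhdsWithin, hc.aestronglyMeasurable measurableSet_uIcc⟩

theorem Convex.eq_of_hasDerivWithinAt_zero {F : ℝ → ℝ} {K : Set ℝ} (hK : Convex ℝ K)
    (hF : ∀ u ∈ K, HasDerivWithinAt F 0 K u) {s t : ℝ} (hs : s ∈ K) (ht : t ∈ K) :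
    F t = F s := by
  have h := hK.norm_image_sub_le_of_norm_hasDerivWithin_le (f' := fun _ => 0)
    (C := 0) hF (fun _ _ => norm_zero.le) hs ht
  rw [zero_mul, norm_le_zero_iff, sub_eq_zero] at h
  exact h

theorem eq_mul_exp_integral_of_hasDerivWithinAt {c w : ℝ → ℝ} {s t : ℝ}
    (hc : ContinuousOn c (uIcc s t))
    (hw : ∀ u ∈ uIcc s t, HasDerivWithinAt w (c u * w u) (uIcc s t) u) :
    w t = w s * exp (∫ u in s..t, c u) := by
  -- `w · exp (-∫ₛ c)` has zero derivative.
  set I : ℝ → ℝ := fun v => ∫ u in s..v, c u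
  have hF : ∀ u ∈ uIcc s t, HasDerivWithinAt (fun v => w v * exp (-I v)) 0 (uIcc s t) u := by
    intro u hu
    refine ((hw u hu).mul (hc.hasDerivWithinAt_integral_uIcc hu).neg.exp).congr_deriv ?_
    ring
  have h := (convex_uIcc s t).eq_of_hasDerivWithinAt_zero hF left_mem_uIcc right_mem_uIcc
  simp only [I, intervalIntegral.integral_same, neg_zero, exp_zero, mul_one] at h
  rw [← h, mul_assoc, ← exp_add, neg_add_cancel, exp_zero, mul_one]

theorem HasDerivWithinAt.sq_add_sq_of_eulerian_s2 {a b : ℝ → ℝ} {γ φ : ℝ} {J : Set ℝ} {t : ℝ}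
    (ha : HasDerivWithinAt a (γ * a t - φ * b t) J t)
    (hb : HasDerivWithinAt b (γ * b t + φ * a t) J t) :
    HasDerivWithinAt (fun u => a u ^ 2 + b u ^ 2) (2 * γ * (a t ^ 2 + b t ^ 2)) J t := by
  refine ((ha.pow 2).add (hb.pow 2)).congr_deriv ?_
  ring

theorem eulerian_leaf_invariance_general
    (n : ℕ) (J : Set ℝ) (hJ : J.OrdConnected)
    (g : ((Fin n → ℝ) × (Fin n → ℝ)) → ℝ)
    (f : Fin n → ((Fin n → ℝ) × (Fin n → ℝ)) → ℝ)
    (hg : Continuous g)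
    (x y : ℝ → Fin n → ℝ)
    (hx : ∀ t ∈ J, ∀ i : Fin n, HasDerivWithinAt (fun s => x s i)
      (g (x t, y t) * x t i - f i (x t, y t) * y t i) J t)
    (hy : ∀ t ∈ J, ∀ i : Fin n, HasDerivWithinAt (fun s => y s i)
      (g (x t, y t) * y t i + f i (x t, y t) * x t i) J t) :
    ∀ (i j : Fin n), ∀ s ∈ J, ∀ t ∈ J,
      ((x t i) ^ 2 + (y t i) ^ 2) * ((x s j) ^ 2 + (y s j) ^ 2) =
      ((x t j) ^ 2 + (y t j) ^ 2) * ((x s i) ^ 2 + (y s i) ^ 2) := by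
  intro i j s hs t ht
  have hsub : uIcc s t ⊆ J := hJ.uIcc_subset hs ht
  have hstate : ContinuousOn (fun u => (x u, y u)) J := fun u hu =>
    (continuousWithinAt_pi.2 fun k => (hx u hu k).continuousWithinAt).prodMk
      (continuousWithinAt_pi.2 fun k => (hy u hu k).continuousWithinAt)
  have hc : ContinuousOn (fun u => 2 * g (x u, y u)) (uIcc s t) :=
    (continuous_const.mul hg).comp_continuousOn (hstate.mono hsub)
  have hamp : ∀ k, x t k ^ 2 + y t k ^ 2 =
      (x s k ^ 2 + y s k ^ 2) * exp (∫ u in s..t, 2 * g (x u, y u)) := fun k =>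
    eq_mul_exp_integral_of_hasDerivWithinAt hc fun u hu =>
      ((hx u (hsub hu) k).sq_add_sq_of_eulerian_s2 (hy u (hsub hu) k)).mono hsub
  rw [hamp i, hamp j]
  ring

/-- **Conservation of amplitude ratios along Eulerian flows.**
Along any solution of the Eulerian system
`ẋᵢ = g(x,y)·xᵢ − fᵢ(x,y)·yᵢ`, `ẏᵢ = g(x,y)·yᵢ + fᵢ(x,y)·xᵢ` on an interval `J`,
the ratios of the radial amplitudes `xᵢ² + yᵢ²` are conserved:
`(xᵢ(t)²+yᵢ(t)²)(xⱼ(s)²+yⱼ(s)²) = (xⱼ(t)²+yⱼ(t)²)(xᵢ(s)²+yᵢ(s)²)`. -/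
theorem eulerian_leaf_invariance
    (n : ℕ) (hn : 1 ≤ n) (J : Set ℝ) (hJ : J.OrdConnected)
    (g : ((Fin n → ℝ) × (Fin n → ℝ)) → ℝ)
    (f : Fin n → ((Fin n → ℝ) × (Fin n → ℝ)) → ℝ)
    (hg : Continuous g) (hf : ∀ i, Continuous (f i))
    (x y : ℝ → Fin n → ℝ)
    (hx : ∀ t ∈ J, ∀ i : Fin n, HasDerivWithinAt (fun s => x s i)
      (g (x t, y t) * x t i - f i (x t, y t) * y t i) J t)
    (hy : ∀ t ∈ J, ∀ i : Fin n, HasDerivWithinAt (fun s => y s i)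
      (g (x t, y t) * y t i + f i (x t, y t) * x t i) J t) :
    ∀ (i j : Fin n), ∀ s ∈ J, ∀ t ∈ J,
      ((x t i) ^ 2 + (y t i) ^ 2) * ((x s j) ^ 2 + (y s j) ^ 2) =
      ((x t j) ^ 2 + (y t j) ^ 2) * ((x s i) ^ 2 + (y s i) ^ 2) :=
  eulerian_leaf_invariance_general n J hJ g f hg x y hx hy
end

section
/- Let k ≥ 1, ν₀ > 0, a_1, …, a_k ∈ ℝ with a_j < 0 for all j, t₀ ∈ ℝ, and r⁰ ∈ ℝ^k with r⁰_k > 0. For t ≥ t₀ define r_i(t) = (r⁰_i / r⁰_k) · √( (−ν₀·(r⁰_k)²·exp(2ν₀(t − t₀))) / (Σ_{j=1}^k a_j·(r⁰_j)²·(exp(2ν₀(t − t₀)) − 1) − ν₀) ). Then for all t ≥ t₀ the denominator Σ_j a_j (r⁰_j)²(exp(2ν₀(t−t₀)) − 1) − ν₀ is negative (so r is well defined), r(t₀) = r⁰, and r is differentiable with r_i′(t) = r_i(t)·(ν₀ + Σ_{j=1}^k a_j·r_j(t)²) for all t ≥ t₀ and all i. (This is the explicit flow of the radial amplitude system used in the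 proof of orbital equivalence of the 2k-cell normal forms.) -/
/-!
The ray through `r⁰` is invariant: writing `rᵢ = (r⁰ᵢ / r⁰ₖ) ρ`, the system reduces to the
scalar Bernoulli equation `ρ' = ρ (ν₀ + σ ρ²)` with `σ = Σⱼ aⱼ (r⁰ⱼ / r⁰ₖ)²`. Its square
`u = ρ²` solves the logistic equation `u' = 2u (ν₀ + σ u)`, whose explicit solution is the
radicand of `radialFlow`; the signs `ν₀ > 0`, `aⱼ < 0` keep its denominator negative.
-/

/-- The explicit radial flow of the truncated 2k-cell normal form
(`k = n+1`, with `Fin.last n` playing the role of the index `k`). -/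
noncomputable def radialFlow (n : ℕ) (ν₀ t₀ : ℝ) (a r0 : Fin (n + 1) → ℝ)
    (i : Fin (n + 1)) (t : ℝ) : ℝ :=
  (r0 i / r0 (Fin.last n)) *
    Real.sqrt ((-ν₀ * (r0 (Fin.last n)) ^ 2 * Real.exp (2 * ν₀ * (t - t₀))) /
      ((∑ j, a j * (r0 j) ^ 2 * (Real.exp (2 * ν₀ * (t - t₀)) - 1)) - ν₀))

open Real

/-- The solution of `u' = 2u (ν + (S / c) u)` with `u t₀ = c`. -/
noncomputable def logisticFlow (ν t₀ S c t : ℝ) : ℝ :=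
  -ν * c * exp (2 * ν * (t - t₀)) / (S * (exp (2 * ν * (t - t₀)) - 1) - ν)

section Logistic

variable {ν t₀ S c t : ℝ}

lemma one_le_exp_two_mul_sub (hν : 0 ≤ ν) (ht : t₀ ≤ t) : 1 ≤ exp (2 * ν * (t - t₀)) :=
  one_le_exp (by have := sub_nonneg.2 ht; positivity)

lemma logisticFlow_denom_neg (hν : 0 < ν) (hS : S ≤ 0) (ht : t₀ ≤ t) :
    S * (exp (2 * ν * (t - t₀)) - 1) - ν < 0 := by
  have hE := one_le_exp_two_mul_sub hν.le ht
  nlinarith [mul_nonpos_of_nonpos_of_nonneg hS (sub_nonneg.2 hE)]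

lemma logisticFlow_pos (hν : 0 < ν) (hS : S ≤ 0) (hc : 0 < c) (ht : t₀ ≤ t) :
    0 < logisticFlow ν t₀ S c t :=
  div_pos_of_neg_of_neg (by nlinarith [mul_pos (mul_pos hν hc) (exp_pos (2 * ν * (t - t₀)))])
    (logisticFlow_denom_neg hν hS ht)

lemma logisticFlow_self (hν : ν ≠ 0) : logisticFlow ν t₀ S c t₀ = c := by
  simp only [logisticFlow, sub_self, mul_zero, exp_zero, zero_sub]
  field_simp

lemma hasDerivAt_logisticFlow (hc : c ≠ 0) (hD : S * (exp (2 * ν * (t - t₀)) - 1) - ν ≠ 0) :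
    HasDerivAt (logisticFlow ν t₀ S c)
      (2 * logisticFlow ν t₀ S c t * (ν + S / c * logisticFlow ν t₀ S c t)) t := by
  have hE : HasDerivAt (fun s ↦ exp (2 * ν * (s - t₀))) (exp (2 * ν * (t - t₀)) * (2 * ν)) t := by
    simpa using (((hasDerivAt_id t).sub_const t₀).const_mul (2 * ν)).exp
  refine ((hE.const_mul (-ν * c)).div (((hE.sub_const 1).const_mul S).sub_const ν) hD).congr_deriv
    ?_
  simp only [logisticFlow]
  generalize exp (2 * ν * (t - t₀)) = E at hD ⊢
  field_simp
  ring

end Logistic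

lemma HasDerivAt.sqrt_of_logistic {u : ℝ → ℝ} {ν σ t : ℝ}
    (hu : HasDerivAt u (2 * u t * (ν + σ * u t)) t) (hpos : 0 < u t) :
    HasDerivAt (fun s ↦ √(u s)) (√(u t) * (ν + σ * √(u t) ^ 2)) t := by
  refine (hu.sqrt hpos.ne').congr_deriv ?_
  have hne : √(u t) ≠ 0 := (sqrt_pos.2 hpos).ne'
  rw [sq_sqrt hpos.le]
  field_simp
  rw [sq_sqrt hpos.le]
  ring

lemma HasDerivAt.const_mul_of_bernoulli {ι : Type*} [Fintype ι] (a c : ι → ℝ) {ρ : ℝ → ℝ}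
    {ν t : ℝ} (hρ : HasDerivAt ρ (ρ t * (ν + (∑ j, a j * c j ^ 2) * ρ t ^ 2)) t) (i : ι) :
    HasDerivAt (fun s ↦ c i * ρ s) (c i * ρ t * (ν + ∑ j, a j * (c j * ρ t) ^ 2)) t := by
  refine (hρ.const_mul (c i)).congr_deriv ?_
  simp only [mul_pow, ← mul_assoc, ← Finset.sum_mul]

/-- **The explicit flow of the radial amplitude system.**
For `ν₀ > 0`, all `aⱼ < 0` and `r⁰` with last component positive, the formula
`rᵢ(t) = (r⁰ᵢ/r⁰ₖ)·√(−ν₀(r⁰ₖ)²e^{2ν₀(t−t₀)} / (Σⱼ aⱼ(r⁰ⱼ)²(e^{2ν₀(t−t₀)} − 1) − ν₀))`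
has negative denominator for all `t ≥ t₀` (so it is well defined), satisfies
`r(t₀) = r⁰`, and solves `rᵢ′ = rᵢ(ν₀ + Σⱼ aⱼ rⱼ²)` for `t ≥ t₀`. -/
theorem radial_flow_solves
    (n : ℕ) (ν₀ : ℝ) (hν : 0 < ν₀) (a : Fin (n + 1) → ℝ) (ha : ∀ j, a j < 0)
    (t₀ : ℝ) (r0 : Fin (n + 1) → ℝ) (hr0 : 0 < r0 (Fin.last n)) :
    (∀ t ≥ t₀,
      (∑ j, a j * (r0 j) ^ 2 * (Real.exp (2 * ν₀ * (t - t₀)) - 1)) - ν₀ < 0) ∧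
    (∀ i, radialFlow n ν₀ t₀ a r0 i t₀ = r0 i) ∧
    (∀ t ≥ t₀, ∀ i, HasDerivWithinAt (radialFlow n ν₀ t₀ a r0 i)
      (radialFlow n ν₀ t₀ a r0 i t *
        (ν₀ + ∑ j, a j * (radialFlow n ν₀ t₀ a r0 j t) ^ 2))
      (Set.Ici t₀) t) := by
  set K := r0 (Fin.last n)
  set S := ∑ j, a j * r0 j ^ 2
  have hS : S ≤ 0 :=
    Finset.sum_nonpos fun j _ ↦ mul_nonpos_of_nonpos_of_nonneg (ha j).le (sq_nonneg _)
  have hflow i :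
      radialFlow n ν₀ t₀ a r0 i = fun t ↦ r0 i / K * √(logisticFlow ν₀ t₀ S (K ^ 2) t) := by
    ext t
    rw [radialFlow, logisticFlow, ← Finset.sum_mul]
  have hσ : ∑ j, a j * (r0 j / K) ^ 2 = S / K ^ 2 := by
    simp only [S, div_pow, ← mul_div_assoc, ← Finset.sum_div]
  refine ⟨fun t ht ↦ ?_, fun i ↦ ?_, fun t ht i ↦ ?_⟩
  · rw [← Finset.sum_mul]
    exact logisticFlow_denom_neg hν hS ht
  · rw [hflow]
    dsimp only
    rw [logisticFlow_self hν.ne', sqrt_sq hr0.le, div_mul_cancel₀ _ hr0.ne']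
  · have hu := hasDerivAt_logisticFlow (pow_ne_zero 2 hr0.ne') (logisticFlow_denom_neg hν hS ht).ne
    have hρ := hu.sqrt_of_logistic (logisticFlow_pos hν hS (pow_pos hr0 2) ht)
    rw [← hσ] at hρ
    simp only [hflow]
    exact (hρ.const_mul_of_bernoulli a (fun j ↦ r0 j / K) i).hasDerivWithinAt
end

section
/- Let n ≥ 1, ω_1, …, ω_n ∈ ℝ, ν₀ > 0, and a_1, …, a_n ∈ ℝ with a_j < 0 for all j, and define u(x, y) = ν₀ + Σ_{j=1}^n a_j·(x_j² + y_j²). Let (x, y) : [0, ∞) → ℝ^n × ℝ^n be a C¹ solution of the system ẋ_i = −ω_i·y_i + u(x,y)·x_i, ẏ_i = ω_i·x_i + u(x,y)·y_i with (x(0), y(0)) ≠ 0. Then u(x(t), y(t)) → 0 as t → ∞. (When all a_j < 0 and ν₀ > 0, the flow-invariant toral CW complex {u = 0} bifurcated from the origin at the variety T_{Pch} = {ν₀ = 0} is asymptotically stable: every nonzero solution approaches it.) -/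
/-!
The weighted energy `U = Σ aⱼ (xⱼ² + yⱼ²)` obeys the scalar Riccati equation `U' = 2U(ν₀ + U)`,
since the rotation part of the system does not change `xⱼ² + yⱼ²`. Writing `V = ν₀ + U`, the
quantity `Φ = V(0) e^{-2ν₀t} U - U(0) V` satisfies the linear equation `Φ' = 2UΦ` with `Φ(0) = 0`;
as `U ≤ 0`, `Φ²` is nonincreasing, so `Φ ≡ 0`. Solving `Φ = 0` for `V` gives
`V = -ν₀ V(0) e^{-2ν₀t} / (U(0) - V(0) e^{-2ν₀t}) → 0`, because `U(0) ≠ 0` for a nonzero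
initial value.
-/

open Set Filter Topology Real

lemma eq_zero_of_hasDerivWithinAt_mul_of_nonpos {f g : ℝ → ℝ} {a : ℝ}
    (hf : ∀ t ≥ a, HasDerivWithinAt f (g t * f t) (Ici a) t)
    (hg : ∀ t ≥ a, g t ≤ 0) (hfa : f a = 0) : ∀ t ≥ a, f t = 0 := by
  have hanti : AntitoneOn (fun t => f t ^ 2) (Ici a) := by
    refine antitoneOn_of_hasDerivWithinAt_nonpos (f' := fun t => 2 * g t * f t ^ 2)
      (convex_Ici a) (fun t ht => (hf t ht).continuousWithinAt.pow 2) (fun t ht => ?_)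
      (fun t ht => ?_)
    · rw [interior_Ici] at ht ⊢
      exact (((hf t ht.le).fun_pow 2).mono Ioi_subset_Ici_self).congr_deriv (by push_cast; ring)
    · rw [interior_Ici] at ht
      exact mul_nonpos_of_nonpos_of_nonneg (by linarith [hg t ht.le]) (sq_nonneg _)
  intro t ht
  simpa [hfa] using hanti self_mem_Ici ht ht

lemma riccati_first_integral {U : ℝ → ℝ} {ν : ℝ}
    (hU : ∀ t ≥ 0, HasDerivWithinAt U (2 * U t * (ν + U t)) (Ici 0) t)
    (hU_nonpos : ∀ t ≥ 0, U t ≤ 0) :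
    ∀ t ≥ 0, U 0 * (ν + U t) = (ν + U 0) * exp (-(2 * ν * t)) * U t := by
  have hexp (t : ℝ) :
      HasDerivAt (fun s => exp (-(2 * ν * s))) (-(2 * ν) * exp (-(2 * ν * t))) t := by
    simpa [mul_comm] using ((hasDerivAt_id t).const_mul (2 * ν)).neg.exp
  have key := eq_zero_of_hasDerivWithinAt_mul_of_nonpos
    (f := fun t => (ν + U 0) * exp (-(2 * ν * t)) * U t - U 0 * (ν + U t))
    (g := fun t => 2 * U t)
    (fun t ht => ((((hexp t).hasDerivWithinAt.const_mul (ν + U 0)).mul (hU t ht)).sub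
      ((hU t ht).const_add ν |>.const_mul (U 0))).congr_deriv (by ring))
    (fun t ht => by linarith [hU_nonpos t ht]) (by simp; ring)
  intro t ht
  linarith [key t ht]

lemma tendsto_add_nhds_zero_of_riccati {U : ℝ → ℝ} {ν : ℝ} (hν : 0 < ν)
    (hU : ∀ t ≥ 0, HasDerivWithinAt U (2 * U t * (ν + U t)) (Ici 0) t)
    (hU_nonpos : ∀ t ≥ 0, U t ≤ 0) (hU₀ : U 0 ≠ 0) :
    Tendsto (fun t => ν + U t) atTop (𝓝 0) := by
  set k := ν + U 0
  have hexp : Tendsto (fun t => exp (-(2 * ν * t))) atTop (𝓝 0) :=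
    tendsto_exp_neg_atTop_nhds_zero.comp (tendsto_id.const_mul_atTop (by positivity))
  have hden : Tendsto (fun t => U 0 - k * exp (-(2 * ν * t))) atTop (𝓝 (U 0)) := by
    simpa using tendsto_const_nhds.sub (hexp.const_mul k)
  have hlim : Tendsto (fun t => -(ν * k * exp (-(2 * ν * t))) / (U 0 - k * exp (-(2 * ν * t))))
      atTop (𝓝 0) := by
    have h := (hexp.const_mul (ν * k)).neg.div hden hU₀
    rwa [mul_zero, neg_zero, zero_div] at h
  refine hlim.congr' ?_
  filter_upwards [hden.eventually_ne hU₀, eventually_ge_atTop 0] with t hne ht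
  rw [div_eq_iff hne]
  linear_combination -(riccati_first_integral hU hU_nonpos t ht)

lemma HasDerivWithinAt.sq_add_sq_of_rotation {p q : ℝ → ℝ} {w c : ℝ} {s : Set ℝ} {t : ℝ}
    (hp : HasDerivWithinAt p (-w * q t + c * p t) s t)
    (hq : HasDerivWithinAt q (w * p t + c * q t) s t) :
    HasDerivWithinAt (fun r => p r ^ 2 + q r ^ 2) (2 * c * (p t ^ 2 + q t ^ 2)) s t :=
  ((hp.fun_pow 2).add (hq.fun_pow 2)).congr_deriv (by push_cast; ring)

section WeightedSqNorm

variable {ι : Type*} [Fintype ι]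

def weightedSqNorm (a p q : ι → ℝ) : ℝ := ∑ j, a j * (p j ^ 2 + q j ^ 2)

lemma weightedSqNorm_nonpos {a : ι → ℝ} (ha : ∀ j, a j ≤ 0) (p q : ι → ℝ) :
    weightedSqNorm a p q ≤ 0 :=
  Finset.sum_nonpos fun j _ => mul_nonpos_of_nonpos_of_nonneg (ha j) (by positivity)

lemma weightedSqNorm_eq_zero_iff {a : ι → ℝ} (ha : ∀ j, a j < 0) {p q : ι → ℝ} :
    weightedSqNorm a p q = 0 ↔ p = 0 ∧ q = 0 := by
  rw [weightedSqNorm, Finset.sum_eq_zero_iff_of_nonpos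
    fun j _ => mul_nonpos_of_nonpos_of_nonneg (ha j).le (by positivity)]
  simp [(ha _).ne, sq, mul_self_add_mul_self_eq_zero, funext_iff, forall_and]

lemma hasDerivWithinAt_weightedSqNorm {ω a : ι → ℝ} {c : ℝ} {x y : ℝ → ι → ℝ}
    {s : Set ℝ} {t : ℝ}
    (hx : ∀ i, HasDerivWithinAt (fun r => x r i) (-ω i * y t i + c * x t i) s t)
    (hy : ∀ i, HasDerivWithinAt (fun r => y r i) (ω i * x t i + c * y t i) s t) :
    HasDerivWithinAt (fun r => weightedSqNorm a (x r) (y r))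
      (2 * c * weightedSqNorm a (x t) (y t)) s t := by
  have := HasDerivWithinAt.fun_sum fun j (_ : j ∈ Finset.univ) =>
    (HasDerivWithinAt.sq_add_sq_of_rotation (p := fun r => x r j) (q := fun r => y r j)
      (hx j) (hy j)).const_mul (a j)
  refine this.congr_deriv ?_
  simp only [weightedSqNorm, Finset.mul_sum]
  exact Finset.sum_congr rfl fun j _ => by ring

end WeightedSqNorm

theorem toral_set_asymptotic_stability_general
    (n : ℕ) (ω a : Fin n → ℝ) (ν₀ : ℝ)
    (hν : 0 < ν₀) (ha : ∀ j, a j < 0)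
    (x y : ℝ → Fin n → ℝ)
    (hx : ∀ t ≥ (0 : ℝ), ∀ i : Fin n, HasDerivWithinAt (fun s => x s i)
      (-ω i * y t i + (ν₀ + ∑ j, a j * ((x t j) ^ 2 + (y t j) ^ 2)) * x t i)
      (Set.Ici 0) t)
    (hy : ∀ t ≥ (0 : ℝ), ∀ i : Fin n, HasDerivWithinAt (fun s => y s i)
      (ω i * x t i + (ν₀ + ∑ j, a j * ((x t j) ^ 2 + (y t j) ^ 2)) * y t i)
      (Set.Ici 0) t)
    (h0 : ¬ (x 0 = 0 ∧ y 0 = 0)) :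
    Filter.Tendsto (fun t => ν₀ + ∑ j, a j * ((x t j) ^ 2 + (y t j) ^ 2))
      Filter.atTop (nhds 0) := by
  have hU (t : ℝ) (ht : t ≥ 0) : HasDerivWithinAt (fun s => weightedSqNorm a (x s) (y s))
      (2 * weightedSqNorm a (x t) (y t) * (ν₀ + weightedSqNorm a (x t) (y t))) (Ici 0) t :=
    (hasDerivWithinAt_weightedSqNorm (hx t ht) (hy t ht)).congr_deriv
      (by unfold weightedSqNorm; ring)
  exact tendsto_add_nhds_zero_of_riccati hν hU
    (fun t _ => weightedSqNorm_nonpos (fun j => (ha j).le) _ _)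
    fun h => h0 ((weightedSqNorm_eq_zero_iff ha).1 h)

/-- **Asymptotic stability of the bifurcated toral CW complex.**
For `ν₀ > 0` and all `aⱼ < 0`, every solution of the truncated normal-form
Eulerian system `ẋᵢ = −ωᵢyᵢ + u(x,y)·xᵢ`, `ẏᵢ = ωᵢxᵢ + u(x,y)·yᵢ` with
`u(x,y) = ν₀ + Σⱼ aⱼ(xⱼ² + yⱼ²)` and nonzero initial value satisfies
`u(x(t), y(t)) → 0` as `t → ∞`: the toral complex `{u = 0}` attracts all
nonzero solutions. -/
theorem toral_set_asymptotic_stability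
    (n : ℕ) (hn : 1 ≤ n) (ω a : Fin n → ℝ) (ν₀ : ℝ)
    (hν : 0 < ν₀) (ha : ∀ j, a j < 0)
    (x y : ℝ → Fin n → ℝ)
    (hx : ∀ t ≥ (0 : ℝ), ∀ i : Fin n, HasDerivWithinAt (fun s => x s i)
      (-ω i * y t i + (ν₀ + ∑ j, a j * ((x t j) ^ 2 + (y t j) ^ 2)) * x t i)
      (Set.Ici 0) t)
    (hy : ∀ t ≥ (0 : ℝ), ∀ i : Fin n, HasDerivWithinAt (fun s => y s i)
      (ω i * x t i + (ν₀ + ∑ j, a j * ((x t j) ^ 2 + (y t j) ^ 2)) * y t i)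
      (Set.Ici 0) t)
    (h0 : ¬ (x 0 = 0 ∧ y 0 = 0)) :
    Filter.Tendsto (fun t => ν₀ + ∑ j, a j * ((x t j) ^ 2 + (y t j) ^ 2))
      Filter.atTop (nhds 0) :=
  toral_set_asymptotic_stability_general n ω a ν₀ hν ha x y hx hy h0
end

section
/- Let k ≥ 2, let a = (a_1, …, a_k) ∈ ℝ^k, and let A_{ij} (1 ≤ i ≤ j ≤ k) be real numbers that are all strictly positive. Define a₁, a₂, F : ℝ^k → ℝ by a₁(c) = Σ_{i=1}^k a_i c_i², a₂(c) = Σ_{1 ≤ i ≤ j ≤ k} A_{ij} c_i² c_j², and F(c) = a₁(c)²/(4·a₂(c)). Suppose c ∈ ℝ^k satisfies c_i > 0 for all i and a₁(c) ≠ 0 (note a₂(c) > 0), and suppose the Fréchet derivative of F at c vanishes. Then a_i·a_j > 0 for all i, j ∈ {1,…,k}. (Consequently, when some pair satisfies a_i a_j < 0 and all second-order coefficients have one sign, the leaf-dependent saddle-node parameter value a₁(C)²/(4a₂(C)) has no critical points on S^{k−1}_{>0}, so its extrema ν_min and ν_max over the closed positive sphere are attained only on the boundary, as in the derivation of the cell-bifurcation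 variety T_{SN}.) -/
/-!
Write `F = a₁² / (4 a₂)`. Along the `m`-th coordinate line through `c`, the quotient rule turns
`∂ₘF(c) = 0` into `4 aₘ cₘ a₂(c) = a₁(c) ∂ₘa₂(c)`, since `∂ₘa₁(c) = 2 aₘ cₘ` and `a₁(c) ≠ 0`.
With positive weights and positive `c`, both `a₂(c)` and `∂ₘa₂(c)` are positive, so every `aₘ`
has the sign of `a₁(c)`.
-/

open Function Finset

lemma eq_of_hasDerivAt_sq_div_eq_zero {p q : ℝ → ℝ} {p' q' x : ℝ} (hp : HasDerivAt p p' x)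
    (hq : HasDerivAt q q' x) (hpx : p x ≠ 0) (hqx : q x ≠ 0)
    (h : HasDerivAt (fun t => p t ^ 2 / (4 * q t)) 0 x) : 2 * p' * q x = p x * q' := by
  have h' := ((hp.fun_pow 2).fun_div (hq.const_mul 4) (by positivity)).unique h
  field_simp at h'
  norm_num at h'
  apply mul_left_cancel₀ hpx
  linear_combination h'

lemma hasDerivAt_sq_update {ι : Type*} [DecidableEq ι] (c : ι → ℝ) (m i : ι) :
    HasDerivAt (fun t => update c m t i ^ 2) (Pi.single (M := fun _ => ℝ) m (2 * c m) i)
      (c m) := by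
  rcases eq_or_ne i m with rfl | hi
  · simpa using hasDerivAt_pow 2 (c i)
  · simpa [hi] using hasDerivAt_const (c m) (c i ^ 2)

lemma hasDerivAt_comp_update {ι : Type*} [Fintype ι] [DecidableEq ι] {f : (ι → ℝ) → ℝ}
    {f' : (ι → ℝ) →L[ℝ] ℝ} {c : ι → ℝ} (hf : HasFDerivAt f f' c) (m : ι) :
    HasDerivAt (fun t => f (update c m t)) (f' (Pi.single m 1)) (c m) :=
  (update_eq_self m c ▸ hf).comp_hasDerivAt (c m) (hasDerivAt_update c m (c m))

section LeafCoefficients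

variable {ι : Type*} [Fintype ι]

def leafCoeff₁ (a d : ι → ℝ) : ℝ := ∑ i, a i * d i ^ 2

def leafCoeff₂ (B : ι → ι → ℝ) (d : ι → ℝ) : ℝ := ∑ i, ∑ j, B i j * d i ^ 2 * d j ^ 2

noncomputable def saddleNodeValue (a : ι → ℝ) (B : ι → ι → ℝ) (d : ι → ℝ) : ℝ :=
  leafCoeff₁ a d ^ 2 / (4 * leafCoeff₂ B d)

lemma leafCoeff₂_pos {B : ι → ι → ℝ} (hB : ∀ i j, 0 ≤ B i j) {d : ι → ℝ} {m : ι}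
    (hBm : 0 < B m m) (hdm : d m ≠ 0) : 0 < leafCoeff₂ B d :=
  sum_pos' (fun i _ => sum_nonneg fun j _ => by have := hB i j; positivity)
    ⟨m, mem_univ m, sum_pos' (fun j _ => by have := hB m j; positivity)
      ⟨m, mem_univ m, by positivity⟩⟩

lemma differentiableAt_saddleNodeValue (a : ι → ℝ) (B : ι → ι → ℝ) {d : ι → ℝ}
    (hd : leafCoeff₂ B d ≠ 0) : DifferentiableAt ℝ (saddleNodeValue a B) d := by
  unfold saddleNodeValue leafCoeff₁ leafCoeff₂
  fun_prop (disch := simpa [leafCoeff₂] using hd)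

variable [DecidableEq ι]

lemma hasDerivAt_leafCoeff₁_update (a c : ι → ℝ) (m : ι) :
    HasDerivAt (fun t => leafCoeff₁ a (update c m t)) (2 * a m * c m) (c m) := by
  have := HasDerivAt.fun_sum fun i (_ : i ∈ univ) =>
    (hasDerivAt_sq_update c m i).const_mul (a i)
  refine this.congr_deriv ?_
  rw [← dotProduct, dotProduct_single]
  ring

lemma hasDerivAt_leafCoeff₂_update (B : ι → ι → ℝ) (c : ι → ℝ) (m : ι) :
    HasDerivAt (fun t => leafCoeff₂ B (update c m t))
      (2 * c m * (∑ j, B m j * c j ^ 2 + ∑ i, B i m * c i ^ 2)) (c m) := by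
  have := HasDerivAt.fun_sum fun i (_ : i ∈ univ) => HasDerivAt.fun_sum fun j (_ : j ∈ univ) =>
    ((hasDerivAt_sq_update c m i).const_mul (B i j)).fun_mul (hasDerivAt_sq_update c m j)
  refine this.congr_deriv ?_
  simp only [update_eq_self, Pi.single_apply, mul_ite, ite_mul, mul_zero, zero_mul,
    sum_add_distrib, sum_ite_eq', mem_univ, if_true, sum_ite_irrel, sum_const_zero]
  rw [mul_add, mul_sum, mul_sum]
  congr 1 <;> exact sum_congr rfl fun _ _ => by ring

theorem mul_leafCoeff₁_pos_of_fderiv_saddleNodeValue_eq_zero {a : ι → ℝ} {B : ι → ι → ℝ}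
    (hB : ∀ i j, 0 ≤ B i j) (hBdiag : ∀ i, 0 < B i i) {c : ι → ℝ} (hc : ∀ i, 0 < c i)
    (h1 : leafCoeff₁ a c ≠ 0) (hcrit : fderiv ℝ (saddleNodeValue a B) c = 0) (m : ι) :
    0 < a m * leafCoeff₁ a c := by
  have hD := leafCoeff₂_pos hB (hBdiag m) (hc m).ne'
  have hF : HasFDerivAt (saddleNodeValue a B) 0 c :=
    hcrit ▸ (differentiableAt_saddleNodeValue a B hD.ne').hasFDerivAt
  have hline := hasDerivAt_comp_update hF m
  rw [zero_apply] at hline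
  have hquot := eq_of_hasDerivAt_sq_div_eq_zero (hasDerivAt_leafCoeff₁_update a c m)
    (hasDerivAt_leafCoeff₂_update B c m) (by simpa) (by simpa using hD.ne') hline
  simp only [update_eq_self] at hquot
  have hrow : 0 < ∑ j, B m j * c j ^ 2 :=
    sum_pos' (fun j _ => mul_nonneg (hB m j) (sq_nonneg _))
      ⟨m, mem_univ m, mul_pos (hBdiag m) (pow_pos (hc m) 2)⟩
  have hcol : 0 ≤ ∑ i, B i m * c i ^ 2 :=
    sum_nonneg fun i _ => mul_nonneg (hB i m) (sq_nonneg _)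
  have hcm := hc m
  have hprod : 0 < a m * leafCoeff₁ a c * (4 * c m * leafCoeff₂ B c) :=
    calc 0 < leafCoeff₁ a c ^ 2 *
          (2 * c m * (∑ j, B m j * c j ^ 2 + ∑ i, B i m * c i ^ 2)) := by positivity
      _ = _ := by linear_combination -(leafCoeff₁ a c) * hquot
  exact pos_of_mul_pos_left hprod (by positivity)

end LeafCoefficients

theorem saddle_node_value_no_interior_critical_points_general
    (k : ℕ) (a : Fin k → ℝ) (A : Fin k → Fin k → ℝ)
    (hA : ∀ i j : Fin k, i ≤ j → 0 < A i j)
    (c : Fin k → ℝ) (hc : ∀ i, 0 < c i)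
    (h1 : (∑ i, a i * (c i) ^ 2) ≠ 0)
    (hcrit : fderiv ℝ (fun d : Fin k → ℝ =>
      (∑ i, a i * (d i) ^ 2) ^ 2 /
        (4 * ∑ i, ∑ j, if i ≤ j then A i j * (d i) ^ 2 * (d j) ^ 2 else 0)) c = 0) :
    ∀ i j : Fin k, 0 < a i * a j := by
  set B : Fin k → Fin k → ℝ := fun i j => if i ≤ j then A i j else 0
  have hB : ∀ i j, 0 ≤ B i j := fun i j => by
    dsimp only [B]
    split_ifs with h
    exacts [(hA i j h).le, le_rfl]
  have hBdiag : ∀ i, 0 < B i i := fun i => by simp [B, hA i i le_rfl]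
  have hF : (fun d : Fin k → ℝ => (∑ i, a i * (d i) ^ 2) ^ 2 /
      (4 * ∑ i, ∑ j, if i ≤ j then A i j * (d i) ^ 2 * (d j) ^ 2 else 0)) =
      saddleNodeValue a B := by
    funext d
    simp [saddleNodeValue, leafCoeff₁, leafCoeff₂, B, ite_mul]
  rw [hF] at hcrit
  intro i j
  have hi := mul_leafCoeff₁_pos_of_fderiv_saddleNodeValue_eq_zero hB hBdiag hc h1 hcrit i
  have hj := mul_leafCoeff₁_pos_of_fderiv_saddleNodeValue_eq_zero hB hBdiag hc h1 hcrit j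
  refine pos_of_mul_pos_left (b := leafCoeff₁ a c ^ 2) ?_ (sq_nonneg _)
  convert mul_pos hi hj using 1
  ring

/-- **No critical points of the saddle-node parameter value inside the positive sphere.**
With `a₁(c) = Σᵢ aᵢcᵢ²`, `a₂(c) = Σ_{i≤j} A_{ij}cᵢ²cⱼ²` (all `A_{ij} > 0`) and
`F = a₁²/(4a₂)`, if `c` has all positive components, `a₁(c) ≠ 0`, and the Fréchet
derivative of `F` vanishes at `c`, then all the `aᵢ` have the same sign. -/
theorem saddle_node_value_no_interior_critical_points
    (k : ℕ) (hk : 2 ≤ k) (a : Fin k → ℝ) (A : Fin k → Fin k → ℝ)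
    (hA : ∀ i j : Fin k, i ≤ j → 0 < A i j)
    (c : Fin k → ℝ) (hc : ∀ i, 0 < c i)
    (h1 : (∑ i, a i * (c i) ^ 2) ≠ 0)
    (hcrit : fderiv ℝ (fun d : Fin k → ℝ =>
      (∑ i, a i * (d i) ^ 2) ^ 2 /
        (4 * ∑ i, ∑ j, if i ≤ j then A i j * (d i) ^ 2 * (d j) ^ 2 else 0)) c = 0) :
    ∀ i j : Fin k, 0 < a i * a j :=
  saddle_node_value_no_interior_critical_points_general k a A hA c hc h1 hcrit
end
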